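/- Let κ be an uncountable regular cardinal with κ^{<κ}=κ. Every κ-λ-set A ⊆ 2^κ is perfectly κ-meagre: for every perfect set P ⊆ 2^κ, A ∩ P is κ-meagre relative to P. -/

import Mathlib

noncomputable section

open Cardinal Set

namespace GenSp

/-- The index set: a canonical type of order type `κ.ord`. -/
abbrev I (κ : Cardinal.{0}) : Type := κ.ord.ToType

variable (κ : Cardinal.{0}) (A : Type)

/-- The generalized space `A^κ`. -/
abbrev Sp : Type := I κ → A

/-- The basic clopen set `[x ↾ ξ]`: all functions agreeing with `x` below `ξ`. -/
def cyl (x : Sp κ A) (ξ : I κ) : Set (Sp κ A) := {y | ∀ β < ξ, y β = x β}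

/-- The bounded topology on `A^κ`, generated by the basic clopen sets. -/
def bt : TopologicalSpace (Sp κ A) :=
  .generateFrom {S | ∃ x ξ, S = cyl κ A x ξ}

/-- Open in the bounded topology. -/
def OpenK (s : Set (Sp κ A)) : Prop := @IsOpen _ (bt κ A) s

/-- Closed in the bounded topology. -/
def ClosedK (s : Set (Sp κ A)) : Prop := @IsClosed _ (bt κ A) s

/-- Nowhere dense in the bounded topology. -/
def NwdK (s : Set (Sp κ A)) : Prop := @IsNowhereDense _ (bt κ A) s

/-- κ-meagre: a union of (at most) κ nowhere dense sets. -/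
def MeagreK (s : Set (Sp κ A)) : Prop :=
  ∃ f : I κ → Set (Sp κ A), (∀ i, NwdK κ A (f i)) ∧ s = ⋃ i, f i

/-- κ-strongly null set. -/
def SNullK (S : Set (Sp κ A)) : Prop :=
  ∀ ξ : I κ → I κ, ∃ a : I κ → Sp κ A, S ⊆ ⋃ α, cyl κ A (a α) (ξ α)

/-- Coordinatewise addition over `ℤ₂` (translation by `x`). -/
def xadd (x y : Sp κ Bool) : Sp κ Bool := fun i => xor (x i) (y i)

/-- The covering number of the κ-meagre ideal. -/
def covM : Cardinal :=
  sInf {c | ∃ 𝒜 : Set (Set (Sp κ A)), #𝒜 = c ∧ (∀ s ∈ 𝒜, MeagreK κ A s) ∧ ⋃₀ 𝒜 = Set.univ}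

/-- The cofinality of the κ-meagre ideal. -/
def cofM : Cardinal :=
  sInf {c | ∃ 𝒜 : Set (Set (Sp κ A)), #𝒜 = c ∧ (∀ s ∈ 𝒜, MeagreK κ A s) ∧
    ∀ t, MeagreK κ A t → ∃ s ∈ 𝒜, t ⊆ s}

/-- κ is weakly compact: uncountable and with the partition property κ → (κ)²₂. -/
def IsWeaklyCompact (κ : Cardinal.{0}) : Prop :=
  ℵ₀ < κ ∧ ∀ c : I κ → I κ → Bool, ∃ H : Set (I κ), #H = κ ∧
    ∃ b : Bool, ∀ i ∈ H, ∀ j ∈ H, i < j → c i j = b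

/-- `S` is κ-meagre relative to `P` (in the subspace topology). -/
def MeagreInK (P S : Set (Sp κ A)) : Prop :=
  ∃ f : I κ → Set P,
    (∀ i, @IsNowhereDense _ (TopologicalSpace.induced Subtype.val (bt κ A)) (f i)) ∧
    {x : P | (x : Sp κ A) ∈ S} = ⋃ i, f i

/-- Perfect set in the bounded topology. -/
def PerfK (P : Set (Sp κ A)) : Prop := @Perfect _ (bt κ A) P

/-- Perfectly κ-meagre set. -/
def PMeagreK (S : Set (Sp κ A)) : Prop := ∀ P, PerfK κ A P → MeagreInK κ A P S

/-- κ-λ-set. -/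
def KLambdaSet (S : Set (Sp κ A)) : Prop :=
  ∀ B ⊆ S, #B ≤ κ → ∃ G : I κ → Set (Sp κ A),
    (∀ i, OpenK κ A (G i)) ∧ (⋂ i, G i) ∩ S = B

/-- κ-σ-set. -/
def KSigmaSet (S : Set (Sp κ A)) : Prop :=
  ∀ F : I κ → Set (Sp κ A), (∀ i, ClosedK κ A (F i)) →
    ∃ G : I κ → Set (Sp κ A), (∀ i, OpenK κ A (G i)) ∧
      S ∩ (⋃ i, F i) = S ∩ (⋂ i, G i)

/-- κ-γ-set: every open (proper) κ-cover contains a κ-γ-subcover of size κ. -/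
def KGammaSet (X : Set (Sp κ A)) : Prop :=
  ∀ 𝒰 : Set (Set (Sp κ A)), (∀ U ∈ 𝒰, OpenK κ A U) → X ∉ 𝒰 →
    (∀ C ⊆ X, #C < κ → ∃ U ∈ 𝒰, C ⊆ U) →
    ∃ U : I κ → Set (Sp κ A), (∀ α, U α ∈ 𝒰) ∧
      X ⊆ ⋃ α, ⋂ β, ⋂ (_ : α < β), U β

/-- A (proper) open cover of `X` of size κ, indexed by `I κ`. -/
def IsOCovSeq (X : Set (Sp κ A)) (U : I κ → Set (Sp κ A)) : Prop :=
  (∀ α, OpenK κ A (U α)) ∧ (∀ α, U α ≠ X) ∧ X ⊆ ⋃ α, U α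

/-- A (proper) κ-γ-cover of `X`, indexed by `I κ`. -/
def IsGammaCovSeq (X : Set (Sp κ A)) (U : I κ → Set (Sp κ A)) : Prop :=
  (∀ α, OpenK κ A (U α)) ∧ (∀ α, U α ≠ X) ∧
    X ⊆ ⋃ α, ⋂ β, ⋂ (_ : α < β), U β

/-- The cover `U` is essentially of size κ: no subfamily of size `< κ` covers `X`. -/
def EssK (X : Set (Sp κ A)) (U : I κ → Set (Sp κ A)) : Prop :=
  ∀ s : Set (I κ), #s < κ → ¬ X ⊆ ⋃ β ∈ s, U β

/-- The selection principle `S₁^κ(Γ_κ, Γ_κ)`. -/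
def S1GammaGamma (X : Set (Sp κ A)) : Prop :=
  ∀ 𝒰 : I κ → I κ → Set (Sp κ A), (∀ α, IsGammaCovSeq κ A X (𝒰 α)) →
    ∃ f : I κ → I κ, IsGammaCovSeq κ A X (fun α => 𝒰 α (f α))

/-- The κ-Hurewicz property `U^κ_{<κ}(O_κ, Γ_κ)`. -/
def KHurewicz (X : Set (Sp κ A)) : Prop :=
  ∀ 𝒰 : I κ → I κ → Set (Sp κ A), (∀ α, IsOCovSeq κ A X (𝒰 α)) →
    (∀ α, EssK κ A X (𝒰 α)) →
    ∃ V : I κ → Set (I κ), (∀ α, #(V α) < κ) ∧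
      IsGammaCovSeq κ A X (fun α => ⋃ β ∈ V α, 𝒰 α β)

/-- The κ-Menger property `U^κ_{<κ}(O_κ, O_κ)`. -/
def KMenger (X : Set (Sp κ A)) : Prop :=
  ∀ 𝒰 : I κ → I κ → Set (Sp κ A), (∀ α, IsOCovSeq κ A X (𝒰 α)) →
    (∀ α, EssK κ A X (𝒰 α)) →
    ∃ V : I κ → Set (I κ), (∀ α, #(V α) < κ) ∧
      IsOCovSeq κ A X (fun α => ⋃ β ∈ V α, 𝒰 α β)

/-- The κ-Rothberger property `S₁^κ(O_κ, O_κ)`. -/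
def KRothberger (X : Set (Sp κ A)) : Prop :=
  ∀ 𝒰 : I κ → I κ → Set (Sp κ A), (∀ α, IsOCovSeq κ A X (𝒰 α)) →
    ∃ f : I κ → I κ, IsOCovSeq κ A X (fun α => 𝒰 α (f α))

/-- Closed unbounded subset of `I κ`. -/
def IsClubK (S : Set (I κ)) : Prop :=
  (∀ a : I κ, ∃ b ∈ S, a < b) ∧
  (∀ a : I κ, (∃ b, b < a) → (∀ b < a, ∃ c ∈ S, b < c ∧ c < a) → a ∈ S)

/-- Stationary subset of `I κ`. -/
def IsStatK (S : Set (I κ)) : Prop :=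
  ∀ C : Set (I κ), IsClubK κ C → (S ∩ C).Nonempty

/-- The diamond principle `◇_κ(E)`. -/
def DiamondK (E : Set (I κ)) : Prop :=
  ∃ s : I κ → Set (I κ), (∀ α, s α ⊆ Iio α) ∧
    ∀ X : Set (I κ), IsStatK κ {α | α ∈ E ∧ X ∩ Iio α = s α}

/-- The guessing principle `◇_κ(E, 2^κ, NS_κ)`. -/
def DiamondFunK (E : Set (I κ)) : Prop :=
  ∃ s : I κ → Sp κ Bool,
    ∀ x : Sp κ Bool, IsStatK κ {α | α ∈ E ∧ ∀ β < α, x β = s α β}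

/-- `S` is `X`-small. -/
def XSmall (X : Set (I κ)) (S : Set (Sp κ A)) : Prop :=
  ∃ a : I κ → Sp κ A, S ⊆ ⋃ α ∈ X, cyl κ A (a α) α

/-- `S` is small in `A^κ`. -/
def SmallK (S : Set (Sp κ A)) : Prop :=
  ∃ lam : Cardinal, lam < κ ∧ ∀ α : I κ, ∃ T : Set (Sp κ A),
    #T ≤ lam ∧ S ⊆ ⋃ x ∈ T, cyl κ A x α

end GenSp

/-!
Since `κ ^< κ = κ`, the bounded topology has a base of at most `κ` cylinders, so `S ∩ P` has
a dense subset `Q` of size at most `κ`. The λ-property gives open sets `G i` with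
`Q = S ∩ ⋂ i, G i`, hence `S ∩ P = ⋃ i, ((S ∩ P) \ G i) ∪ {q i}` for an enumeration `q`
of `Q`. Each `(S ∩ P) \ G i` lies in the closure of `Q` but misses the open set `G i ⊇ Q`,
so it is nowhere dense in `P`; a point is nowhere dense in `P` because `P` has no isolated
points.
-/

open TopologicalSpace

section

variable {X : Type*} [TopologicalSpace X]

theorem Preperfect.perfectSpace {C : Set X} (hC : Preperfect C) : PerfectSpace C := by
  refine ⟨preperfect_iff_nhds.2 fun x _ U hU => ?_⟩
  obtain ⟨u, hu, huU⟩ := mem_nhds_subtype C x U |>.1 hU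
  obtain ⟨y, ⟨hyu, hyC⟩, hyx⟩ := preperfect_iff_nhds.1 hC x x.2 u hu
  exact ⟨⟨y, hyC⟩, ⟨huU hyu, mem_univ _⟩, fun h => hyx (congrArg Subtype.val h)⟩

theorem IsNowhereDense.union {s t : Set X} (hs : IsNowhereDense s) (ht : IsNowhereDense t) :
    IsNowhereDense (s ∪ t) := by
  rw [IsNowhereDense, closure_union,
    interior_union_isClosed_of_interior_empty isClosed_closure ht, hs]

theorem Set.Subsingleton.isNowhereDense [T1Space X] [PerfectSpace X] {s : Set X}
    (hs : s.Subsingleton) : IsNowhereDense s := by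
  obtain rfl | ⟨x, rfl⟩ := hs.eq_empty_or_singleton
  · exact isNowhereDense_empty
  · rw [IsNowhereDense, closure_singleton, interior_singleton]

theorem isNowhereDense_of_subset_closure_of_disjoint {E Q G : Set X} (hEQ : E ⊆ closure Q)
    (hG : IsOpen G) (hQG : Q ⊆ G) (hEG : Disjoint E G) : IsNowhereDense E := by
  set U := interior (closure E)
  have hUQ : U ⊆ closure Q := interior_subset.trans (closure_minimal hEQ isClosed_closure)
  have hUG : Disjoint U G :=
    (hEG.symm.closure_right hG).symm.mono_left interior_subset
  have hU : Disjoint U (closure Q) := (hUG.mono_right hQG).closure_right isOpen_interior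
  exact hU.eq_bot_of_le hUQ

theorem TopologicalSpace.IsTopologicalBasis.exists_subset_closure_mk_le {B : Set (Set X)}
    (hB : IsTopologicalBasis B) (D : Set X) :
    ∃ Q ⊆ D, D ⊆ closure Q ∧ #Q ≤ #B := by
  let pick : {b : B // ((b : Set X) ∩ D).Nonempty} → X := fun b => b.2.some
  refine ⟨range pick, range_subset_iff.2 fun b => b.2.some_mem.2, fun x hx => ?_,
    mk_range_le.trans (mk_subtype_le _)⟩
  refine hB.mem_closure_iff.2 fun o ho hxo => ?_
  let b : {b : B // ((b : Set X) ∩ D).Nonempty} := ⟨⟨o, ho⟩, x, hxo, hx⟩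
  exact ⟨pick b, b.2.some_mem.1, b, rfl⟩

theorem exists_isNowhereDense_iUnion_eq [T1Space X] [PerfectSpace X] {ι : Type*}
    {D Q : Set X} {G : ι → Set X} (hDQ : D ⊆ closure Q) (hG : ∀ i, IsOpen (G i))
    (hGD : (⋂ i, G i) ∩ D = Q) {e : Q → ι} (he : e.Injective) :
    ∃ f : ι → Set X, (∀ i, IsNowhereDense (f i)) ∧ D = ⋃ i, f i := by
  have hQG : ∀ i, Q ⊆ G i := fun i => hGD ▸ inter_subset_left.trans (iInter_subset G i)
  have hQD : Q ⊆ D := hGD ▸ inter_subset_right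
  refine ⟨fun i => (D \ G i) ∪ Subtype.val '' (e ⁻¹' {i}), fun i => ?_, ?_⟩
  · refine (isNowhereDense_of_subset_closure_of_disjoint (sdiff_subset.trans hDQ) (hG i)
      (hQG i) disjoint_sdiff_left).union ?_
    exact ((subsingleton_singleton.preimage he).image Subtype.val).isNowhereDense
  · refine subset_antisymm (fun x hx => ?_) (iUnion_subset fun i =>
      union_subset sdiff_subset (image_subset_iff.2 fun q _ => hQD q.2))
    by_cases hxG : ∀ i, x ∈ G i
    · have hxQ : x ∈ Q := hGD ▸ ⟨mem_iInter.2 hxG, hx⟩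
      exact mem_iUnion.2 ⟨e ⟨x, hxQ⟩, Or.inr ⟨⟨x, hxQ⟩, rfl, rfl⟩⟩
    · obtain ⟨i, hi⟩ := not_forall.1 hxG
      exact mem_iUnion.2 ⟨i, Or.inl ⟨hx, hi⟩⟩

end

namespace GenSp

variable {κ : Cardinal.{0}} {A : Type}

theorem mem_cyl_self (x : Sp κ A) (ξ : I κ) : x ∈ cyl κ A x ξ := fun _ _ => rfl

theorem cyl_eq_of_mem {x a : Sp κ A} {ξ : I κ} (h : x ∈ cyl κ A a ξ) :
    cyl κ A x ξ = cyl κ A a ξ :=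
  ext fun y => forall₂_congr fun β hβ => by rw [h β hβ]

theorem cyl_anti (x : Sp κ A) {ξ ζ : I κ} (h : ξ ≤ ζ) : cyl κ A x ζ ⊆ cyl κ A x ξ :=
  fun _ hy β hβ => hy β (hβ.trans_le h)

theorem openK_cyl (x : Sp κ A) (ξ : I κ) : OpenK κ A (cyl κ A x ξ) :=
  .basic _ ⟨x, ξ, rfl⟩

theorem isTopologicalBasis_cyl [Nonempty (I κ)] :
    @IsTopologicalBasis _ (bt κ A) {S | ∃ x ξ, S = cyl κ A x ξ} := by
  let := bt κ A
  refine ⟨?_, eq_univ_of_forall fun x => ?_, rfl⟩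
  · rintro _ ⟨a, ξ, rfl⟩ _ ⟨b, ζ, rfl⟩ x ⟨hxa, hxb⟩
    refine ⟨cyl κ A x (max ξ ζ), ⟨x, _, rfl⟩, mem_cyl_self x _, subset_inter ?_ ?_⟩
    · exact (cyl_eq_of_mem hxa).subst (cyl_anti x (le_max_left ξ ζ))
    · exact (cyl_eq_of_mem hxb).subst (cyl_anti x (le_max_right ξ ζ))
  · obtain ⟨ξ⟩ := ‹Nonempty (I κ)›
    exact ⟨_, ⟨x, ξ, rfl⟩, mem_cyl_self x ξ⟩

theorem t1Space_bt [NoMaxOrder (I κ)] : @T1Space _ (bt κ A) := by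
  let := bt κ A
  refine t1Space_iff_exists_open.2 fun x y hxy => ?_
  obtain ⟨j, hj⟩ := Function.ne_iff.1 hxy
  obtain ⟨ξ, hjξ⟩ := exists_gt j
  exact ⟨cyl κ A x ξ, openK_cyl x ξ, mem_cyl_self x ξ, fun hy => hj (hy j hjξ).symm⟩

theorem mk_cyl_le (hκ : ℵ₀ ≤ κ) (hA : #A ≤ κ) (hpow : κ ^< κ = κ) :
    #{S | ∃ x ξ, S = cyl κ A x ξ} ≤ κ := by
  let restrictCyl : (Σ ξ : I κ, (Iio ξ → A)) → Set (Sp κ A) :=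
    fun p => {y | ∀ β (hβ : β < p.1), y β = p.2 ⟨β, hβ⟩}
  have hsub : {S | ∃ x ξ, S = cyl κ A x ξ} ⊆ range restrictCyl := by
    rintro _ ⟨x, ξ, rfl⟩
    exact ⟨⟨ξ, fun β => x β⟩, rfl⟩
  calc #{S | ∃ x ξ, S = cyl κ A x ξ}
      ≤ #(Σ ξ : I κ, (Iio ξ → A)) := (mk_le_mk_of_subset hsub).trans mk_range_le
    _ = sum fun ξ : I κ => #A ^ #(Iio ξ) := by simp only [mk_sigma, mk_arrow, lift_id]
    _ ≤ sum fun _ : I κ => κ := sum_le_sum _ _ fun ξ => calc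
        #A ^ #(Iio ξ) ≤ κ ^ #(Iio ξ) := power_le_power_right hA
        _ ≤ κ ^< κ := le_powerlt κ ((mk_Iio_lt ξ (by simp)).trans_eq (mk_ord_toType κ))
        _ = κ := hpow
    _ = κ := by rw [sum_const', mk_ord_toType, mul_eq_self hκ]

theorem KLambdaSet.pMeagreK (hκ : ℵ₀ ≤ κ) (hA : #A ≤ κ) (hpow : κ ^< κ = κ)
    {S : Set (Sp κ A)} (hS : KLambdaSet κ A S) : PMeagreK κ A S := by
  intro P hP
  let := bt κ A
  have : NoMaxOrder (I κ) := noMaxOrder hκ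
  have : Nonempty (I κ) :=
    mk_ne_zero_iff.1 <| (mk_ord_toType κ).trans_ne (aleph0_pos.trans_le hκ).ne'
  have := t1Space_bt (κ := κ) (A := A)
  have : PerfectSpace P := hP.acc.perfectSpace
  obtain ⟨Q, hQS, hSQ, hQcard⟩ := (isTopologicalBasis_cyl.isInducing .subtypeVal)
    |>.exists_subset_closure_mk_le (Subtype.val ⁻¹' S : Set P)
  have hQκ : #Q ≤ κ := hQcard.trans (mk_image_le.trans (mk_cyl_le hκ hA hpow))
  obtain ⟨G, hG, hGS⟩ := hS (Subtype.val '' Q) (image_subset_iff.2 hQS) (mk_image_le.trans hQκ)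
  obtain ⟨e⟩ : Nonempty (Q ↪ I κ) := by rw [← le_def, mk_ord_toType]; exact hQκ
  refine exists_isNowhereDense_iUnion_eq hSQ (fun i => (hG i).preimage continuous_subtype_val)
    ?_ e.injective
  rw [← preimage_iInter]
  exact (congrArg (Subtype.val ⁻¹' ·) hGS).trans (Subtype.val_injective.preimage_image Q)

theorem stmt10_general (κ : Cardinal.{0}) (hk : Cardinal.aleph0 < κ) (hpow : κ ^< κ = κ)
    (S : Set (Sp κ Bool)) (hS : KLambdaSet κ Bool S) :
    PMeagreK κ Bool S :=
  hS.pMeagreK hk.le (by rw [mk_bool]; exact (natCast_lt_aleph0.trans hk).le) hpow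

theorem stmt10 (κ : Cardinal.{0}) (hk : Cardinal.aleph0 < κ) (hreg : κ.IsRegular) (hpow : κ ^< κ = κ)
    (S : Set (Sp κ Bool)) (hS : KLambdaSet κ Bool S) :
    PMeagreK κ Bool S :=
  stmt10_general κ hk hpow S hS

end GenSp
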